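/- There exists a constant C > 0 such that for all β, γ ∈ ℝ and all integers k₁,…,k₅ with k₁+k₂+k₃+k₄ = 0, (k₁+k₂)(k₃+k₄) ≠ 0, and 8³·max_{1≤j≤4}|k_j| < |k₅|, one has Φ₀^{(3)}(k₁,k₂,k₃+k₄+k₅) ≠ 0 and | 9·(Q₁^{(3)}/Φ₀^{(3)})(k₁,k₂,k₃+k₄+k₅)·Q₂^{(3)}(k₃,k₄,k₅) + 9·(Q₂^{(3)}/Φ₀^{(3)})(k₁,k₂,k₃+k₄+k₅)·Q₁^{(3)}(k₃,k₄,k₅) | ≤ C·|β|·|γ|·( max_{1≤j≤4}|k_j|² ) / |k₁+k₂|. (This is the cancellation |M₁₁^{(5)} + M₁₃^{(5)}| ≲ max_{1≤j≤4}|k_j|²/|k_{1,2}| of Proposition 4.5, with the multipliers written out explicitly on their common support.) -/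

import Mathlib

set_option maxHeartbeats 1000000


/-- `Φ₀^{(3)}` in factored form. -/
noncomputable def Phi0_3 (x y z : ℤ) : ℂ :=
  -(5 / 2) * Complex.I * ((x + y : ℤ) : ℂ) * ((y + z : ℤ) : ℂ) * ((x + z : ℤ) : ℂ) *
    (((x + y : ℤ) : ℂ) ^ 2 + ((y + z : ℤ) : ℂ) ^ 2 + ((x + z : ℤ) : ℂ) ^ 2)

/-- The cubic multiplier `Q₁^{(3)}`. -/
noncomputable def Q1_3 (γ : ℝ) (x y z : ℤ) : ℂ :=
  -(Complex.I / 3) * (γ : ℂ) * ((x + y + z : ℤ) : ℂ) *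
    (((x + y : ℤ) : ℂ) ^ 2 + ((y + z : ℤ) : ℂ) ^ 2 + ((x + z : ℤ) : ℂ) ^ 2)

/-- The cubic multiplier `Q₂^{(3)}`. -/
noncomputable def Q2_3 (β : ℝ) (x y z : ℤ) : ℂ :=
  -(Complex.I / 3) * (β : ℂ) * ((x + y + z : ℤ) : ℂ) * ((x * y + y * z + x * z : ℤ) : ℂ)

theorem stmt17 :
    ∃ C : ℝ, 0 < C ∧
      ∀ (β γ : ℝ) (k₁ k₂ k₃ k₄ k₅ : ℤ),
        k₁ + k₂ + k₃ + k₄ = 0 →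
        (k₁ + k₂) * (k₃ + k₄) ≠ 0 →
        8 ^ 3 * max |k₁| (max |k₂| (max |k₃| |k₄|)) < |k₅| →
        Phi0_3 k₁ k₂ (k₃ + k₄ + k₅) ≠ 0 ∧
        ‖(9 * (Q1_3 γ k₁ k₂ (k₃ + k₄ + k₅) / Phi0_3 k₁ k₂ (k₃ + k₄ + k₅)) *
                Q2_3 β k₃ k₄ k₅ +
              9 * (Q2_3 β k₁ k₂ (k₃ + k₄ + k₅) / Phi0_3 k₁ k₂ (k₃ + k₄ + k₅)) *
                Q1_3 γ k₃ k₄ k₅)‖ ≤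
          C * |β| * |γ| *
            ((max |k₁| (max |k₂| (max |k₃| |k₄|)) : ℤ) : ℝ) ^ 2 / ((|k₁ + k₂| : ℤ) : ℝ) := by
  refine ⟨1000, by norm_num, ?_⟩
  intro β γ k₁ k₂ k₃ k₄ k₅ hsum hprod hk5
  have h4 : k₄ = -(k₁ + k₂ + k₃) := by linarith
  subst h4
  set K : ℤ := max |k₁| (max |k₂| (max |k₃| |(-(k₁ + k₂ + k₃))|)) with hKdef
  -- basic bounds
  have hb1 : |k₁| ≤ K := le_max_left _ _
  have hb2 : |k₂| ≤ K := le_trans (le_max_left _ _) (le_max_right _ _)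
  have hb3 : |k₃| ≤ K := le_trans (le_trans (le_max_left _ _) (le_max_right _ _)) (le_max_right _ _)
  have hb4 : |k₁ + k₂ + k₃| ≤ K := by
    have h : |(-(k₁ + k₂ + k₃))| ≤ K :=
      le_trans (le_trans (le_max_right _ _) (le_max_right _ _)) (le_max_right _ _)
    rw [abs_neg] at h
    exact h
  have hn : k₁ + k₂ ≠ 0 := by
    intro h
    apply hprod
    rw [h]; ring
  have hn1 : 1 ≤ |k₁ + k₂| := Int.one_le_abs hn
  have hK1 : 1 ≤ K := by
    have := abs_add_le k₁ k₂
    linarith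
  have hk5' : 512 * K < |k₅| := by
    have h8 : (8:ℤ)^3 * K = 512 * K := by norm_num
    rw [h8] at hk5
    exact hk5
  have hKk5 : 2 * K ≤ |k₅| := by nlinarith
  -- shorthand integers
  set n : ℤ := k₁ + k₂ with hndef
  set S : ℤ := n ^ 2 + (k₅ - k₁) ^ 2 + (k₅ - k₂) ^ 2 with hSdef
  set P : ℤ := k₁ * k₂ + n * k₅ - n ^ 2 with hPdef
  set V : ℤ := k₃ * (-(k₁ + k₂ + k₃)) - n * k₅ with hVdef
  set T : ℤ := n ^ 2 + (k₅ - k₁ - k₂ - k₃) ^ 2 + (k₃ + k₅) ^ 2 with hTdef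
  set w : ℤ := k₅ - n with hwdef
  set M : ℤ := k₅ * w * (S * V + P * T) with hMdef
  set D : ℤ := n * (k₅ - k₁) * (k₅ - k₂) * S with hDdef
  -- S positive and 2S ≥ k₅²
  have hk5abs : k₅ ^ 2 = |k₅| ^ 2 := (sq_abs k₅).symm
  have hSbig : k₅ ^ 2 ≤ 2 * S := by
    have h1 : -|k₁| ≤ k₁ := neg_abs_le k₁
    have h2 : k₁ ≤ |k₁| := le_abs_self k₁
    have h3 : -|k₂| ≤ k₂ := neg_abs_le k₂
    have h4 : k₂ ≤ |k₂| := le_abs_self k₂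
    have h5 : -|k₅| ≤ k₅ := neg_abs_le k₅
    have h6 : k₅ ≤ |k₅| := le_abs_self k₅
    nlinarith [sq_nonneg n, sq_nonneg (k₁ - k₂), mul_nonneg (abs_nonneg k₅) (by linarith : (0:ℤ) ≤ |k₅| - 2*K)]
  have hSpos : 0 < S := by nlinarith [sq_nonneg k₅]
  -- nonvanishing of the linear factors
  have hA : k₅ - k₂ ≠ 0 := by
    intro h
    have : k₅ = k₂ := by linarith
    rw [this] at hk5'
    linarith
  have hB : k₅ - k₁ ≠ 0 := by
    intro h
    have : k₅ = k₁ := by linarith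
    rw [this] at hk5'
    linarith
  have hD : D ≠ 0 := by
    rw [hDdef]
    exact mul_ne_zero (mul_ne_zero (mul_ne_zero hn hB) hA) (ne_of_gt hSpos)
  -- integer estimate
  have key : |M| * |n| ≤ 2500 * K ^ 2 * |D| := by
    have habsK : (0:ℤ) ≤ K := by linarith
    -- |V + P| ≤ 6K²
    have e1 : |V + P| ≤ 6 * K ^ 2 := by
      have hVP : V + P = k₃ * (-(k₁ + k₂ + k₃)) + k₁ * k₂ - n ^ 2 := by
        rw [hVdef, hPdef]; ring
      rw [hVP]
      have t1 : |k₃ * (-(k₁ + k₂ + k₃))| ≤ K ^ 2 := by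
        rw [abs_mul, abs_neg, sq]
        exact mul_le_mul hb3 hb4 (abs_nonneg _) (by linarith)
      have t2 : |k₁ * k₂| ≤ K ^ 2 := by
        rw [abs_mul, sq]
        exact mul_le_mul hb1 hb2 (abs_nonneg _) (by linarith)
      have t3 : |n ^ 2| ≤ 4 * K ^ 2 := by
        rw [abs_pow]
        have hnK : |n| ≤ 2 * K := by
          calc |n| ≤ |k₁| + |k₂| := abs_add_le k₁ k₂
          _ ≤ 2 * K := by linarith
        calc |n| ^ 2 ≤ (2 * K) ^ 2 := pow_le_pow_left₀ (abs_nonneg n) hnK 2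
          _ = 4 * K ^ 2 := by ring
      calc |k₃ * (-(k₁ + k₂ + k₃)) + k₁ * k₂ - n ^ 2|
          ≤ |k₃ * (-(k₁ + k₂ + k₃)) + k₁ * k₂| + |n ^ 2| := abs_sub _ _
        _ ≤ |k₃ * (-(k₁ + k₂ + k₃))| + |k₁ * k₂| + |n ^ 2| := by
            linarith [abs_add_le (k₃ * (-(k₁ + k₂ + k₃))) (k₁ * k₂)]
        _ ≤ 6 * K ^ 2 := by linarith
    -- |T - S| ≤ 4K²
    have e2 : |T - S| ≤ 4 * K ^ 2 := by
      have hTS : T - S = (k₁ + k₂ + k₃) ^ 2 + k₃ ^ 2 - k₁ ^ 2 - k₂ ^ 2 := by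
        rw [hTdef, hSdef, hndef]; ring
      rw [hTS]
      have t1 : (k₁ + k₂ + k₃) ^ 2 ≤ K ^ 2 := by
        rw [← sq_abs (k₁ + k₂ + k₃)]; exact pow_le_pow_left₀ (abs_nonneg _) hb4 2
      have t2 : k₃ ^ 2 ≤ K ^ 2 := by
        rw [← sq_abs k₃]; exact pow_le_pow_left₀ (abs_nonneg _) hb3 2
      have t3 : (0:ℤ) ≤ k₁ ^ 2 := sq_nonneg _
      have t4 : (0:ℤ) ≤ k₂ ^ 2 := sq_nonneg _
      have t5 : k₁ ^ 2 ≤ K ^ 2 := by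
        rw [← sq_abs k₁]; exact pow_le_pow_left₀ (abs_nonneg _) hb1 2
      have t6 : k₂ ^ 2 ≤ K ^ 2 := by
        rw [← sq_abs k₂]; exact pow_le_pow_left₀ (abs_nonneg _) hb2 2
      have t7 : (0:ℤ) ≤ (k₁ + k₂ + k₃) ^ 2 := sq_nonneg _
      have t8 : (0:ℤ) ≤ k₃ ^ 2 := sq_nonneg _
      rw [abs_le]
      constructor
      · linarith
      · linarith
    -- |P| ≤ 2K|k₅| + 5K²
    have e3 : |P| ≤ 2 * K * |k₅| + 5 * K ^ 2 := by
      have t2 : |k₁ * k₂| ≤ K ^ 2 := by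
        rw [abs_mul, sq]
        exact mul_le_mul hb1 hb2 (abs_nonneg _) (by linarith)
      have hnK : |n| ≤ 2 * K := by
        calc |n| ≤ |k₁| + |k₂| := abs_add_le k₁ k₂
        _ ≤ 2 * K := by linarith
      have t3 : |n * k₅| ≤ 2 * K * |k₅| := by
        rw [abs_mul]
        exact mul_le_mul_of_nonneg_right hnK (abs_nonneg k₅)
      have t4 : |n ^ 2| ≤ 4 * K ^ 2 := by
        rw [abs_pow]
        calc |n| ^ 2 ≤ (2 * K) ^ 2 := pow_le_pow_left₀ (abs_nonneg n) hnK 2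
          _ = 4 * K ^ 2 := by ring
      calc |P| = |k₁ * k₂ + n * k₅ - n ^ 2| := by rw [hPdef]
        _ ≤ |k₁ * k₂ + n * k₅| + |n ^ 2| := abs_sub _ _
        _ ≤ |k₁ * k₂| + |n * k₅| + |n ^ 2| := by linarith [abs_add_le (k₁ * k₂) (n * k₅)]
        _ ≤ 2 * K * |k₅| + 5 * K ^ 2 := by linarith
    -- |SV+PT| ≤ 62 K² S
    have e5 : |S * V + P * T| ≤ 62 * K ^ 2 * S := by
      have hsplit : S * V + P * T = S * (V + P) + P * (T - S) := by ring
      have t1 : |S * (V + P)| ≤ 6 * K ^ 2 * S := by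
        rw [abs_mul, abs_of_pos hSpos]
        calc S * |V + P| ≤ S * (6 * K ^ 2) := mul_le_mul_of_nonneg_left e1 hSpos.le
          _ = 6 * K ^ 2 * S := by ring
      have t2 : |P * (T - S)| ≤ 56 * K ^ 2 * S := by
        rw [abs_mul]
        have hKle : K ≤ |k₅| := by linarith
        have h1 : |P| * |T - S| ≤ (2 * K * |k₅| + 5 * K ^ 2) * (4 * K ^ 2) := by
          apply mul_le_mul e3 e2 (abs_nonneg _) (by positivity)
        have hKK : K ^ 2 ≤ K * |k₅| := by
          have : K * K ≤ K * |k₅| := mul_le_mul_of_nonneg_left hKle (by linarith)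
          calc K ^ 2 = K * K := sq K
            _ ≤ K * |k₅| := this
        have h2 : (2 * K * |k₅| + 5 * K ^ 2) * (4 * K ^ 2) ≤ 28 * K ^ 2 * (K * |k₅|) := by
          have h2a : 2 * K * |k₅| + 5 * K ^ 2 ≤ 7 * (K * |k₅|) := by linarith
          have h2b : (2 * K * |k₅| + 5 * K ^ 2) * (4 * K ^ 2) ≤ 7 * (K * |k₅|) * (4 * K ^ 2) := by
            apply mul_le_mul_of_nonneg_right h2a (by positivity)
          calc (2 * K * |k₅| + 5 * K ^ 2) * (4 * K ^ 2) ≤ 7 * (K * |k₅|) * (4 * K ^ 2) := h2b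
            _ = 28 * K ^ 2 * (K * |k₅|) := by ring
        have h3 : K * |k₅| ≤ |k₅| * |k₅| :=
          mul_le_mul_of_nonneg_right hKle (abs_nonneg k₅)
        have h4 : |k₅| * |k₅| ≤ 2 * S := by
          have : |k₅| * |k₅| = k₅ ^ 2 := by rw [hk5abs]; ring
          linarith [hSbig]
        have h5 : 28 * K ^ 2 * (K * |k₅|) ≤ 28 * K ^ 2 * (2 * S) := by
          apply mul_le_mul_of_nonneg_left _ (by positivity)
          linarith
        calc |P| * |T - S| ≤ (2 * K * |k₅| + 5 * K ^ 2) * (4 * K ^ 2) := h1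
          _ ≤ 28 * K ^ 2 * (K * |k₅|) := h2
          _ ≤ 28 * K ^ 2 * (2 * S) := h5
          _ = 56 * K ^ 2 * S := by ring
      calc |S * V + P * T| = |S * (V + P) + P * (T - S)| := by rw [hsplit]
        _ ≤ |S * (V + P)| + |P * (T - S)| := abs_add_le _ _
        _ ≤ 62 * K ^ 2 * S := by linarith
    -- |k₅ w| ≤ 2 k₅²
    have e6 : |k₅ * w| ≤ 2 * k₅ ^ 2 := by
      rw [abs_mul]
      have hnK : |n| ≤ 2 * K := by
        calc |n| ≤ |k₁| + |k₂| := abs_add_le k₁ k₂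
        _ ≤ 2 * K := by linarith
      have hw : |w| ≤ 2 * |k₅| := by
        calc |w| = |k₅ - n| := by rw [hwdef]
        _ ≤ |k₅| + |n| := abs_sub _ _
        _ ≤ 2 * |k₅| := by linarith
      calc |k₅| * |w| ≤ |k₅| * (2 * |k₅|) := mul_le_mul_of_nonneg_left hw (abs_nonneg k₅)
        _ = 2 * (|k₅| * |k₅|) := by ring
        _ = 2 * k₅ ^ 2 := by rw [hk5abs]; ring
    -- k₅² ≤ 4 |(k₅-k₁)(k₅-k₂)|
    have e7 : k₅ ^ 2 ≤ 4 * |(k₅ - k₁) * (k₅ - k₂)| := by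
      rw [abs_mul]
      have h1 : |k₅| ≤ 2 * |k₅ - k₁| := by
        have := abs_sub_abs_le_abs_sub k₅ k₁
        linarith
      have h2 : |k₅| ≤ 2 * |k₅ - k₂| := by
        have := abs_sub_abs_le_abs_sub k₅ k₂
        linarith
      have h3 : |k₅| * |k₅| ≤ (2 * |k₅ - k₁|) * (2 * |k₅ - k₂|) :=
        mul_le_mul h1 h2 (abs_nonneg k₅) (by positivity)
      calc k₅ ^ 2 = |k₅| * |k₅| := by rw [hk5abs]; ring
        _ ≤ (2 * |k₅ - k₁|) * (2 * |k₅ - k₂|) := h3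
        _ = 4 * (|k₅ - k₁| * |k₅ - k₂|) := by ring
    -- assemble
    have hMle : |M| ≤ 496 * K ^ 2 * (|(k₅ - k₁) * (k₅ - k₂)| * S) := by
      calc |M| = |k₅ * w| * |S * V + P * T| := by rw [hMdef, abs_mul]
        _ ≤ (2 * k₅ ^ 2) * (62 * K ^ 2 * S) := by
            apply mul_le_mul e6 e5 (abs_nonneg _) (by positivity)
        _ = 124 * K ^ 2 * (k₅ ^ 2 * S) := by ring
        _ ≤ 124 * K ^ 2 * ((4 * |(k₅ - k₁) * (k₅ - k₂)|) * S) := by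
            apply mul_le_mul_of_nonneg_left _ (by positivity)
            exact mul_le_mul_of_nonneg_right e7 (le_of_lt hSpos)
        _ = 496 * K ^ 2 * (|(k₅ - k₁) * (k₅ - k₂)| * S) := by ring
    have hDeq : |D| = |n| * (|(k₅ - k₁) * (k₅ - k₂)| * S) := by
      have hD2 : D = n * ((k₅ - k₁) * (k₅ - k₂) * S) := by rw [hDdef]; ring
      rw [hD2, abs_mul, abs_mul, abs_of_pos hSpos]
    have habsn : (0:ℤ) < |n| := by linarith
    calc |M| * |n| ≤ (496 * K ^ 2 * (|(k₅ - k₁) * (k₅ - k₂)| * S)) * |n| := by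
          apply mul_le_mul_of_nonneg_right hMle (abs_nonneg _)
      _ = 496 * K ^ 2 * |D| := by rw [hDeq]; ring
      _ ≤ 2500 * K ^ 2 * |D| := by
          have : (0:ℤ) ≤ K ^ 2 * |D| := by positivity
          nlinarith [this]
  -- Phi in product form
  have hPhi : Phi0_3 k₁ k₂ (k₃ + -(k₁ + k₂ + k₃) + k₅) = -(5/2) * Complex.I * ((D : ℤ) : ℂ) := by
    rw [Phi0_3, hDdef, hSdef, hndef]
    push_cast
    ring
  have hPhi_ne : Phi0_3 k₁ k₂ (k₃ + -(k₁ + k₂ + k₃) + k₅) ≠ 0 := by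
    rw [hPhi]
    simp only [ne_eq, mul_eq_zero, Complex.I_ne_zero, Int.cast_eq_zero, hD, or_false]
    norm_num
  refine ⟨hPhi_ne, ?_⟩
  -- factor the four multipliers
  have hQ1 : Q1_3 γ k₁ k₂ (k₃ + -(k₁ + k₂ + k₃) + k₅)
      = -(Complex.I / 3) * (γ : ℂ) * (((k₅ * S : ℤ)) : ℂ) := by
    rw [Q1_3, hSdef, hndef]; push_cast; ring
  have hQ2 : Q2_3 β k₁ k₂ (k₃ + -(k₁ + k₂ + k₃) + k₅)
      = -(Complex.I / 3) * (β : ℂ) * (((k₅ * P : ℤ)) : ℂ) := by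
    rw [Q2_3, hPdef, hndef]; push_cast; ring
  have hQ2' : Q2_3 β k₃ (-(k₁ + k₂ + k₃)) k₅
      = -(Complex.I / 3) * (β : ℂ) * (((w * V : ℤ)) : ℂ) := by
    rw [Q2_3, hVdef, hwdef, hndef]; push_cast; ring
  have hQ1' : Q1_3 γ k₃ (-(k₁ + k₂ + k₃)) k₅
      = -(Complex.I / 3) * (γ : ℂ) * (((w * T : ℤ)) : ℂ) := by
    rw [Q1_3, hTdef, hwdef, hndef]; push_cast; ring
  have hDC : ((D : ℤ) : ℂ) ≠ 0 := Int.cast_ne_zero.mpr hD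
  have hmain : ∀ a b c d Dc : ℂ, Dc ≠ 0 →
      9 * ((-(Complex.I/3) * (γ:ℂ) * a) / (-(5/2) * Complex.I * Dc)) * (-(Complex.I/3) * (β:ℂ) * b)
      + 9 * ((-(Complex.I/3) * (β:ℂ) * c) / (-(5/2) * Complex.I * Dc)) * (-(Complex.I/3) * (γ:ℂ) * d)
      = (-(2/5) * Complex.I) * (β:ℂ) * (γ:ℂ) * (a * b + c * d) / Dc := by
    intro a b c d Dc hDc
    have hden : -(5/2) * Complex.I * Dc ≠ 0 :=
      mul_ne_zero (mul_ne_zero (by norm_num) Complex.I_ne_zero) hDc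
    rw [show (9:ℂ) * ((-(Complex.I/3) * (γ:ℂ) * a) / (-(5/2) * Complex.I * Dc)) * (-(Complex.I/3) * (β:ℂ) * b)
        + 9 * ((-(Complex.I/3) * (β:ℂ) * c) / (-(5/2) * Complex.I * Dc)) * (-(Complex.I/3) * (γ:ℂ) * d)
        = (9 * (-(Complex.I/3) * (γ:ℂ) * a) * (-(Complex.I/3) * (β:ℂ) * b)
          + 9 * (-(Complex.I/3) * (β:ℂ) * c) * (-(Complex.I/3) * (γ:ℂ) * d)) / (-(5/2) * Complex.I * Dc) from by
      ring]
    rw [div_eq_div_iff hden hDc]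
    ring
  have hcast : ((k₅ * S : ℤ) : ℂ) * ((w * V : ℤ) : ℂ) + ((k₅ * P : ℤ) : ℂ) * ((w * T : ℤ) : ℂ)
      = ((M : ℤ) : ℂ) := by
    rw [hMdef]; push_cast; ring
  have hE : 9 * (Q1_3 γ k₁ k₂ (k₃ + -(k₁ + k₂ + k₃) + k₅) /
        Phi0_3 k₁ k₂ (k₃ + -(k₁ + k₂ + k₃) + k₅)) * Q2_3 β k₃ (-(k₁ + k₂ + k₃)) k₅ +
      9 * (Q2_3 β k₁ k₂ (k₃ + -(k₁ + k₂ + k₃) + k₅) /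
        Phi0_3 k₁ k₂ (k₃ + -(k₁ + k₂ + k₃) + k₅)) * Q1_3 γ k₃ (-(k₁ + k₂ + k₃)) k₅
      = (-(2/5) * Complex.I) * (β : ℂ) * (γ : ℂ) * (((M : ℤ)) : ℂ) / ((D : ℤ) : ℂ) := by
    rw [hQ1, hQ2, hQ2', hQ1', hPhi, hmain _ _ _ _ _ hDC, hcast]
  rw [hE]
  -- compute the absolute value
  have habs : ‖((-(2/5) * Complex.I) * (β : ℂ) * (γ : ℂ) * (((M : ℤ)) : ℂ) / ((D : ℤ) : ℂ))‖
      = (2/5) * |β| * |γ| * |(M : ℝ)| / |(D : ℝ)| := by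
    rw [norm_div, norm_mul, norm_mul, norm_mul, norm_mul, Complex.norm_I,
      Complex.norm_real, Complex.norm_real, Complex.norm_intCast, Complex.norm_intCast,
      Real.norm_eq_abs, Real.norm_eq_abs]
    norm_num
  rw [habs]
  -- pass to ℝ
  have hDr : (0:ℝ) < |(D : ℝ)| := by
    simp only [abs_pos, ne_eq, Int.cast_eq_zero]
    exact hD
  have hnr : (0:ℝ) < ((|k₁ + k₂| : ℤ) : ℝ) := by
    exact_mod_cast lt_of_lt_of_le zero_lt_one hn1
  rw [div_le_div_iff₀ hDr hnr]
  have keyR : |(M : ℝ)| * ((|k₁ + k₂| : ℤ) : ℝ) ≤ 2500 * ((K : ℤ) : ℝ) ^ 2 * |(D : ℝ)| := by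
    have := key
    rw [hndef] at this
    calc |(M : ℝ)| * ((|k₁ + k₂| : ℤ) : ℝ) = (((|M| * |k₁ + k₂| : ℤ)) : ℝ) := by
          push_cast; ring
      _ ≤ (((2500 * K ^ 2 * |D| : ℤ)) : ℝ) := by exact_mod_cast this
      _ = 2500 * ((K : ℤ) : ℝ) ^ 2 * |(D : ℝ)| := by push_cast; ring
  have hbg : (0:ℝ) ≤ |β| * |γ| := by positivity
  nlinarith [mul_le_mul_of_nonneg_left keyR hbg, abs_nonneg (M : ℝ), abs_nonneg β, abs_nonneg γ,
    mul_nonneg (mul_nonneg (abs_nonneg β) (abs_nonneg γ)) (abs_nonneg (M:ℝ)),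
    sq_nonneg (((K:ℤ)):ℝ), hDr.le]
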